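/- Fix m, l, g > 0, ρ ∈ ℝ, I₁, I₃ > 0, and set 𝕀 = diag(I₁, I₁, I₃) and χ = e₃ = (0,0,1). If Ω, v, Γ : ℝ → ℝ³ solve the closed-loop Euler–Poincaré system with these data, then the third component Ω₃(t) of Ω(t) is constant in t. -/

import Mathlib

/-! The component `χ ⬝ᵥ μ` of the momentum along the axis equals `χ ⬝ᵥ 𝕀Ω`, because
`χ ⬝ᵥ (χ × v) = 0`. In its derivative the gravity torque `χ × Γ` and the coupling terms
`(χ × v) × Ω + (Ω × χ) × v` are orthogonal to `χ`, leaving `χ ⬝ᵥ (𝕀Ω × Ω)`, which vanishes when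
`𝕀` is symmetric about `χ`. For the Lagrange top this conserved quantity is `I₃ Ω₃`. -/

open Matrix

/-- The closed-loop Euler–Poincaré system: with `μ = 𝕀Ω + m l (χ × v)` and
`p = ρ v + m l (Ω × χ)`, the curves satisfy
`μ' = μ × Ω + p × v − m g l (χ × Γ)`, `p' = p × Ω`, `Γ' = Γ × Ω`. -/
def ClosedLoopEP (m l g ρ : ℝ) (χ : Fin 3 → ℝ) (I : Matrix (Fin 3) (Fin 3) ℝ)
    (Ω v Γ : ℝ → Fin 3 → ℝ) : Prop :=
  Differentiable ℝ Ω ∧ Differentiable ℝ v ∧ Differentiable ℝ Γ ∧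
  (∀ t, deriv (fun s => I *ᵥ Ω s + (m * l) • (χ ⨯₃ v s)) t
      = (I *ᵥ Ω t + (m * l) • (χ ⨯₃ v t)) ⨯₃ Ω t
        + (ρ • v t + (m * l) • (Ω t ⨯₃ χ)) ⨯₃ v t - (m * g * l) • (χ ⨯₃ Γ t)) ∧
  (∀ t, deriv (fun s => ρ • v s + (m * l) • (Ω s ⨯₃ χ)) t
      = (ρ • v t + (m * l) • (Ω t ⨯₃ χ)) ⨯₃ Ω t) ∧
  (∀ t, deriv Γ t = Γ t ⨯₃ Ω t)

theorem HasDerivAt.const_dotProduct {n : Type*} [Fintype n] {f : ℝ → n → ℝ} {f' : n → ℝ}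
    {t : ℝ} (c : n → ℝ) (hf : HasDerivAt f f' t) :
    HasDerivAt (fun s => c ⬝ᵥ f s) (c ⬝ᵥ f') t := by
  unfold dotProduct
  exact HasDerivAt.fun_sum fun i _ => (hasDerivAt_pi.mp hf i).const_mul (c i)

theorem dotProduct_cross_cross_add_cross_cross (χ v w : Fin 3 → ℝ) :
    χ ⬝ᵥ ((χ ⨯₃ v) ⨯₃ w + (w ⨯₃ χ) ⨯₃ v) = 0 := by
  rw [cross_cross_eq_smul_sub_smul, cross_cross_eq_smul_sub_smul]
  simp only [dotProduct_add, dotProduct_sub, dotProduct_smul, smul_eq_mul, dotProduct_comm v w]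
  ring

namespace ClosedLoopEP

variable {m l g ρ : ℝ} {χ : Fin 3 → ℝ} {I : Matrix (Fin 3) (Fin 3) ℝ} {Ω v Γ : ℝ → Fin 3 → ℝ}

theorem differentiable_momentum (h : ClosedLoopEP m l g ρ χ I Ω v Γ) :
    Differentiable ℝ fun s => I *ᵥ Ω s + (m * l) • (χ ⨯₃ v s) :=
  (I.mulVecLin.toContinuousLinearMap.differentiable.comp h.1).add
    (((crossProduct χ).toContinuousLinearMap.differentiable.comp h.2.1).const_smul (m * l))

theorem hasDerivAt_dotProduct_mulVec (h : ClosedLoopEP m l g ρ χ I Ω v Γ) (t : ℝ) :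
    HasDerivAt (fun s => χ ⬝ᵥ I *ᵥ Ω s) (χ ⬝ᵥ ((I *ᵥ Ω t) ⨯₃ Ω t)) t := by
  have hμ := (h.differentiable_momentum t).hasDerivAt.const_dotProduct χ
  simp only [dotProduct_add, dotProduct_smul, dot_self_cross, smul_zero, add_zero] at hμ
  convert hμ using 1
  rw [h.2.2.2.1 t]
  have hcoupling := dotProduct_cross_cross_add_cross_cross χ (v t) (Ω t)
  simp only [LinearMap.map_add₂, LinearMap.map_smul₂, cross_self, smul_zero, dotProduct_add,
    dotProduct_sub, dotProduct_smul, dot_self_cross, dotProduct_zero, smul_eq_mul] at hcoupling ⊢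
  linear_combination -(m * l) * hcoupling

theorem dotProduct_mulVec_eq (h : ClosedLoopEP m l g ρ χ I Ω v Γ)
    (haxis : ∀ w, χ ⬝ᵥ ((I *ᵥ w) ⨯₃ w) = 0) (t : ℝ) :
    χ ⬝ᵥ I *ᵥ Ω t = χ ⬝ᵥ I *ᵥ Ω 0 :=
  is_const_of_deriv_eq_zero (fun s => (h.hasDerivAt_dotProduct_mulVec s).differentiableAt)
    (fun s => (h.hasDerivAt_dotProduct_mulVec s).deriv.trans (haxis _)) t 0

end ClosedLoopEP

theorem dotProduct_diagonal_mulVec_cross_eq_zero (I₁ I₃ : ℝ) (w : Fin 3 → ℝ) :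
    ![0, 0, 1] ⬝ᵥ ((diagonal ![I₁, I₁, I₃] *ᵥ w) ⨯₃ w) = 0 := by
  simp [cross_apply, mulVec_diagonal]
  ring

theorem dotProduct_diagonal_mulVec (I₁ I₃ : ℝ) (w : Fin 3 → ℝ) :
    ![0, 0, 1] ⬝ᵥ diagonal ![I₁, I₁, I₃] *ᵥ w = I₃ * w 2 := by
  rw [vec3_dotProduct]
  simp [mulVec_diagonal]

theorem omega3_constant_general (m l g ρ : ℝ)
    (I₁ I₃ : ℝ) (hI₃ : 0 < I₃)
    (Ω v Γ : ℝ → Fin 3 → ℝ)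
    (hsol : ClosedLoopEP m l g ρ ![(0 : ℝ), 0, 1] (Matrix.diagonal ![I₁, I₁, I₃]) Ω v Γ) :
    ∀ t, Ω t 2 = Ω 0 2 := by
  intro t
  have h := hsol.dotProduct_mulVec_eq (dotProduct_diagonal_mulVec_cross_eq_zero I₁ I₃) t
  rw [dotProduct_diagonal_mulVec, dotProduct_diagonal_mulVec] at h
  exact mul_left_cancel₀ hI₃.ne' h

/-- For the Lagrange top (`𝕀 = diag(I₁, I₁, I₃)`, `χ = e₃`), the third component of
the body angular velocity is constant along solutions of the closed-loop system. -/
theorem omega3_constant (m l g ρ : ℝ) (hm : 0 < m) (hl : 0 < l) (hg : 0 < g)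
    (I₁ I₃ : ℝ) (hI₁ : 0 < I₁) (hI₃ : 0 < I₃)
    (Ω v Γ : ℝ → Fin 3 → ℝ)
    (hsol : ClosedLoopEP m l g ρ ![(0 : ℝ), 0, 1] (Matrix.diagonal ![I₁, I₁, I₃]) Ω v Γ) :
    ∀ t, Ω t 2 = Ω 0 2 :=
  omega3_constant_general m l g ρ I₁ I₃ hI₃ Ω v Γ hsol
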